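/- Let P = (V_0, …, V_{n-1}) be a convex polygon in ℝ², let Π := conv P, and let ℓ be a line with ℓ ∩ int Π ≠ ∅. Then ℓ ∩ edg P = {X, Y} for two distinct points X and Y such that X ∈ [V_i, V_{i+1}) and Y ∈ [V_j, V_{j+1}) for some i, j ∈ {0, …, n-1} with i < j; here [A, B) := {(1-t)A + tB : 0 ≤ t < 1} if A ≠ B and [A, B) := ∅ if A = B. -/

import Mathlib

open Set

noncomputable section

/-- The Euclidean plane. -/
abbrev Pl := EuclideanSpace ℝ (Fin 2)

/-- The `j`-th vertex of the polygon given by the list `L`, with indices taken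
cyclically (so that `V_n = V_0`). -/
def vtx (L : List Pl) (j : ℕ) : Pl := L.getD (j % L.length) 0

/-- The set of vertices of the polygon `L`. -/
def vertexSet (L : List Pl) : Set Pl := {x | x ∈ L}

/-- The union of the edges `[V_i, V_{i+1}]`, `i = 0, …, n-1` (with `V_n = V_0`). -/
def edg (L : List Pl) : Set Pl :=
  ⋃ i ∈ Finset.range L.length, segment ℝ (vtx L i) (vtx L (i + 1))

/-- A polygon is convex if the union of its edges coincides with the boundary of
the convex hull of its vertex set. -/
def IsConvexPolygon (L : List Pl) : Prop :=
  edg L = frontier (convexHull ℝ (vertexSet L))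

/-- A polygon is quasi-convex if the union of its edges is contained in the boundary
of the convex hull of its vertex set. -/
def IsQuasiConvex (L : List Pl) : Prop :=
  edg L ⊆ frontier (convexHull ℝ (vertexSet L))

/-- A polygon is strict if any three of its vertices (with increasing indices)
are non-collinear. -/
def IsStrict (L : List Pl) : Prop :=
  ∀ i j k : ℕ, i < j → j < k → k < L.length →
    ¬ Collinear ℝ ({vtx L i, vtx L j, vtx L k} : Set Pl)

/-- The points of `S` lie to one side of the segment `[A, B]`: there is a line
(the zero set of `f · = c` with `f ≠ 0`) containing `A` and `B` which is the
boundary of a closed half-plane `{x | f x ≤ c}` containing `S`. -/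
def OneSide (A B : Pl) (S : Set Pl) : Prop :=
  ∃ (f : Pl →ₗ[ℝ] ℝ) (c : ℝ), f ≠ 0 ∧ f A = c ∧ f B = c ∧ ∀ p ∈ S, f p ≤ c

/-- `ℓ` is a line in the plane. -/
def IsLine (ℓ : Set Pl) : Prop :=
  ∃ (f : Pl →ₗ[ℝ] ℝ) (c : ℝ), f ≠ 0 ∧ ℓ = {x | f x = c}

/-- The line `ℓ` is supporting to the set `S`: it meets `S` and is the boundary of
a closed half-plane containing `S`. -/
def IsSuppLine (ℓ S : Set Pl) : Prop :=
  (ℓ ∩ S).Nonempty ∧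
    ∃ (f : Pl →ₗ[ℝ] ℝ) (c : ℝ), f ≠ 0 ∧ ℓ = {x | f x = c} ∧ ∀ x ∈ S, f x ≤ c

/-- The half-open segment `[A, B) = {(1-t)A + tB : 0 ≤ t < 1}` if `A ≠ B`,
and `∅` if `A = B`. -/
def hseg (A B : Pl) : Set Pl :=
  {x | A ≠ B ∧ ∃ t : ℝ, 0 ≤ t ∧ t < 1 ∧ x = (1 - t) • A + t • B}

/-- A 2-polytope: a compact convex subset of the plane of dimension 2 whose set of
extreme points is finite. -/
def IsPolytope2 (K : Set Pl) : Prop :=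
  IsCompact K ∧ Convex ℝ K ∧
    Module.finrank ℝ (affineSpan ℝ K).direction = 2 ∧
    (Set.extremePoints ℝ K).Finite

/-!
Translate an interior point `p` of `Π` to the origin. For `t ≥ 0` the point `p + t • d` lies on
`∂Π` exactly when `t * gauge d = 1`, so a line through `p` meets `∂Π = edg P` in exactly one point
on each side of `p`. A point of `edg P` that is not the only vertex lies on some half-open edge
(follow the vertices around the polygon until they leave the point). Finally `X` and `Y` cannot lie
on a common edge: that edge is a segment inside `edg P`, and the midpoint of `X` and `Y` would be a
third point of `ℓ ∩ edg P`.
-/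

open Bornology Topology

section LineThroughInterior

variable {E : Type*} [AddCommGroup E] [Module ℝ E] [TopologicalSpace E] [IsTopologicalAddGroup E]
  [ContinuousSMul ℝ E] [T1Space E] {s : Set E} {x : E}

theorem smul_mem_frontier_iff_eq_inv_gauge (hc : Convex ℝ s) (hs₀ : s ∈ 𝓝 0)
    (hb : IsVonNBounded ℝ s) (hx : x ≠ 0) {t : ℝ} (ht : 0 ≤ t) :
    t • x ∈ frontier s ↔ t = (gauge s x)⁻¹ := by
  have hpos : 0 < gauge s x := (gauge_pos (absorbent_nhds_zero hs₀) hb).2 hx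
  rw [← gauge_eq_one_iff_mem_frontier hc hs₀, gauge_smul_of_nonneg ht, smul_eq_mul,
    ← eq_div_iff hpos.ne', one_div]

theorem exists_smul_mem_frontier_iff (hc : Convex ℝ s) (hs₀ : s ∈ 𝓝 0)
    (hb : IsVonNBounded ℝ s) (hx : x ≠ 0) :
    ∃ a < 0, ∃ b > 0, ∀ t : ℝ, t • x ∈ frontier s ↔ t = a ∨ t = b := by
  have hpos : ∀ {y : E}, y ≠ 0 → 0 < gauge s y := fun hy =>
    (gauge_pos (absorbent_nhds_zero hs₀) hb).2 hy
  refine ⟨-(gauge s (-x))⁻¹, by simpa using hpos (neg_ne_zero.2 hx), (gauge s x)⁻¹,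
    inv_pos.2 (hpos hx), fun t => ?_⟩
  rcases le_total 0 t with ht | ht
  · rw [smul_mem_frontier_iff_eq_inv_gauge hc hs₀ hb hx ht]
    have : 0 < (gauge s (-x))⁻¹ := inv_pos.2 (hpos (neg_ne_zero.2 hx))
    constructor
    · exact Or.inr
    · rintro (rfl | rfl) <;> [linarith; rfl]
  · rw [← neg_smul_neg, smul_mem_frontier_iff_eq_inv_gauge hc hs₀ hb (neg_ne_zero.2 hx)
      (neg_nonneg.2 ht), neg_eq_iff_eq_neg]
    have : 0 < (gauge s x)⁻¹ := inv_pos.2 (hpos hx)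
    constructor
    · exact Or.inl
    · rintro (rfl | rfl) <;> [rfl; linarith]

theorem Convex.exists_line_inter_frontier_eq_pair {K : Set E} (hK : Convex ℝ K)
    (hb : IsVonNBounded ℝ K) {p d : E} (hp : p ∈ interior K) (hd : d ≠ 0) :
    ∃ X Y, X ≠ Y ∧ range (fun t : ℝ => p + t • d) ∩ frontier K = {X, Y} := by
  set s := (p + ·) ⁻¹' K
  have hs₀ : s ∈ 𝓝 0 :=
    (continuous_const_add p).continuousAt.preimage_mem_nhds
      (by simpa using mem_interior_iff_mem_nhds.1 hp)
  have hsb : IsVonNBounded ℝ s := by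
    convert hb.vadd (-p) using 1
    ext y
    simp [s, mem_vadd_set_iff_neg_vadd_mem]
  obtain ⟨a, ha, b, hb, hab⟩ :=
    exists_smul_mem_frontier_iff (hK.translate_preimage_right p) hs₀ hsb hd
  have hfr : ∀ t : ℝ, p + t • d ∈ frontier K ↔ t = a ∨ t = b := fun t => by
    rw [← hab]
    exact Set.ext_iff.1 ((Homeomorph.addLeft p).preimage_frontier K) (t • d)
  refine ⟨p + a • d, p + b • d, fun h => ?_, ?_⟩
  · have := smul_left_injective ℝ hd (add_left_cancel h)
    linarith
  · ext y
    simp only [mem_inter_iff, mem_range, mem_insert_iff, mem_singleton_iff]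
    constructor
    · rintro ⟨⟨t, rfl⟩, hy⟩
      rcases (hfr t).1 hy with rfl | rfl <;> simp
    · rintro (rfl | rfl)
      exacts [⟨⟨a, rfl⟩, (hfr a).2 (Or.inl rfl)⟩, ⟨⟨b, rfl⟩, (hfr b).2 (Or.inr rfl)⟩]

end LineThroughInterior

theorem IsLine.eq_range_of_mem {ℓ : Set Pl} (hℓ : IsLine ℓ) {p : Pl} (hp : p ∈ ℓ) :
    ∃ d : Pl, d ≠ 0 ∧ ℓ = range (fun t : ℝ => p + t • d) := by
  obtain ⟨f, c, hf, rfl⟩ := hℓ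
  replace hp : f p = c := hp
  have hsurj : Function.Surjective f := by
    obtain ⟨v, hv⟩ := DFunLike.ne_iff.mp hf
    exact fun y => ⟨(y / f v) • v, by simp [div_mul_cancel₀ y hv]⟩
  have hker : Module.finrank ℝ (LinearMap.ker f) = 1 := by
    have := LinearMap.finrank_range_add_finrank_ker f
    rw [LinearMap.range_eq_top.2 hsurj, finrank_top, Module.finrank_self,
      finrank_euclideanSpace_fin] at this
    omega
  obtain ⟨d, hd, hspan⟩ := finrank_eq_one_iff'.1 hker
  refine ⟨d, by simpa using hd, Set.ext fun x => ⟨fun hx => ?_, ?_⟩⟩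
  · obtain ⟨t, ht⟩ := hspan ⟨x - p, by simp [show f x = c from hx, hp]⟩
    have : t • (d : Pl) = x - p := Subtype.ext_iff.1 ht
    exact ⟨t, by simp [this]⟩
  · rintro ⟨t, rfl⟩
    simp [hp]

theorem IsLine.convex {ℓ : Set Pl} (hℓ : IsLine ℓ) : Convex ℝ ℓ := by
  obtain ⟨f, c, -, rfl⟩ := hℓ
  exact convex_hyperplane f.isLinear c

theorem eq_of_inter_eq_pair_of_mem_segment {E : Type*} [AddCommGroup E] [Module ℝ E]
    {C S : Set E} {A B X Y : E} (hC : Convex ℝ C) (hCS : C ∩ S = {X, Y})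
    (hAB : segment ℝ A B ⊆ S) (hX : X ∈ segment ℝ A B) (hY : Y ∈ segment ℝ A B) : X = Y := by
  have hXC : X ∈ C := (hCS.symm ▸ mem_insert X {Y} : X ∈ C ∩ S).1
  have hYC : Y ∈ C := (hCS.symm ▸ mem_insert_of_mem X rfl : Y ∈ C ∩ S).1
  have hmid : midpoint ℝ X Y ∈ C ∩ S :=
    ⟨hC.segment_subset hXC hYC (midpoint_mem_segment X Y),
      hAB ((convex_segment A B).segment_subset hX hY (midpoint_mem_segment X Y))⟩
  rw [hCS] at hmid
  rcases hmid with h | h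
  · exact (midpoint_eq_left_iff ℝ).1 h
  · exact (midpoint_eq_right_iff ℝ).1 h

lemma vtx_mod (L : List Pl) (j : ℕ) : vtx L (j % L.length) = vtx L j := by
  rw [vtx, vtx, Nat.mod_mod]

lemma vtx_mod_add_one (L : List Pl) (j : ℕ) : vtx L (j % L.length + 1) = vtx L (j + 1) := by
  rw [vtx, vtx, Nat.mod_add_mod]

lemma vtx_add_length_mul (L : List Pl) (i k : ℕ) : vtx L (i + L.length * k) = vtx L i := by
  rw [vtx, vtx, Nat.add_mul_mod_self_left]

lemma mem_vertexSet_iff {L : List Pl} {x : Pl} :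
    x ∈ vertexSet L ↔ ∃ i < L.length, vtx L i = x := by
  simp only [vertexSet, mem_ofPred_eq, List.mem_iff_getElem]
  refine exists_congr fun i => ⟨fun ⟨hi, h⟩ => ⟨hi, ?_⟩, fun ⟨hi, h⟩ => ⟨hi, ?_⟩⟩ <;>
    simpa [vtx, Nat.mod_eq_of_lt hi, hi] using h

lemma segment_subset_edg {L : List Pl} {i : ℕ} (hi : i < L.length) :
    segment ℝ (vtx L i) (vtx L (i + 1)) ⊆ edg L :=
  subset_biUnion_of_mem (u := fun i => segment ℝ (vtx L i) (vtx L (i + 1)))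
    (Finset.mem_coe.2 (Finset.mem_range.2 hi))

lemma left_mem_hseg {A B : Pl} (h : A ≠ B) : A ∈ hseg A B :=
  ⟨h, 0, le_rfl, zero_lt_one, by simp⟩

lemma hseg_subset_segment (A B : Pl) : hseg A B ⊆ segment ℝ A B := by
  rintro x ⟨-, t, ht₀, ht₁, rfl⟩
  exact segment_eq_image ℝ A B ▸ ⟨t, ⟨ht₀, ht₁.le⟩, rfl⟩

lemma exists_mem_vertexSet_ne_of_mem_convexHull {L : List Pl} {X Y : Pl}
    (hY : Y ∈ convexHull ℝ (vertexSet L)) (hXY : X ≠ Y) : ∃ V ∈ vertexSet L, V ≠ X := by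
  by_contra! h
  have : convexHull ℝ (vertexSet L) ⊆ {X} :=
    convexHull_singleton (𝕜 := ℝ) X ▸ convexHull_mono fun V hV => h V hV
  exact hXY (this hY).symm

lemma exists_mem_hseg_of_vtx_eq {L : List Pl} {X : Pl} {k : ℕ} (hk : vtx L k = X)
    (hne : ∃ V ∈ vertexSet L, V ≠ X) :
    ∃ i < L.length, X ∈ hseg (vtx L i) (vtx L (i + 1)) := by
  suffices ∃ m, vtx L m = X ∧ vtx L (m + 1) ≠ X by
    obtain ⟨m, hm, hm₁⟩ := this
    refine ⟨m % L.length, Nat.mod_lt _ (List.length_pos_of_mem hne.choose_spec.1), ?_⟩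
    rw [vtx_mod, vtx_mod_add_one, ← hm]
    exact left_mem_hseg (hm ▸ hm₁.symm)
  by_contra! hstep
  have hall : ∀ r, vtx L (k + r) = X := fun r => by
    induction r with
    | zero => exact hk
    | succ r ih => exact hstep _ ih
  obtain ⟨V, hV, hVX⟩ := hne
  obtain ⟨s, -, rfl⟩ := mem_vertexSet_iff.1 hV
  obtain ⟨n, hn⟩ := Nat.exists_eq_add_one_of_ne_zero (List.length_pos_of_mem hV).ne'
  have := hall (s + n * k)
  rw [show k + (s + n * k) = s + L.length * k by rw [hn]; ring, vtx_add_length_mul] at this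
  exact hVX this

lemma exists_mem_hseg_of_mem_edg {L : List Pl} {X : Pl} (hX : X ∈ edg L)
    (hne : ∃ V ∈ vertexSet L, V ≠ X) :
    ∃ i < L.length, X ∈ hseg (vtx L i) (vtx L (i + 1)) := by
  simp only [edg, mem_iUnion, Finset.mem_range] at hX
  obtain ⟨i, hi, hXi⟩ := hX
  by_cases hXB : X = vtx L (i + 1)
  · exact exists_mem_hseg_of_vtx_eq hXB.symm hne
  have hAB : vtx L i ≠ vtx L (i + 1) := fun h => hXB (by simpa [← h] using hXi)
  rw [segment_eq_image] at hXi
  obtain ⟨t, ⟨ht₀, ht₁⟩, rfl⟩ := hXi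
  refine ⟨i, hi, hAB, t, ht₀, ht₁.lt_of_ne ?_, rfl⟩
  rintro rfl
  exact hXB (by simp)

/-- a line through the interior of the convex hull of a convex polygon
meets the union of the edges in exactly two distinct points, lying on half-open
edges `[V_i, V_{i+1})` and `[V_j, V_{j+1})` with `i < j`. -/
theorem stmt_10 (L : List Pl) (hconv : IsConvexPolygon L) (ℓ : Set Pl)
    (hline : IsLine ℓ)
    (hint : (ℓ ∩ interior (convexHull ℝ (vertexSet L))).Nonempty) :
    ∃ X Y : Pl, ∃ i j : ℕ, X ≠ Y ∧ ℓ ∩ edg L = {X, Y} ∧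
      i < j ∧ j < L.length ∧
      X ∈ hseg (vtx L i) (vtx L (i + 1)) ∧
      Y ∈ hseg (vtx L j) (vtx L (j + 1)) := by
  obtain ⟨p, hpℓ, hp⟩ := hint
  obtain ⟨d, hd, hℓ⟩ := hline.eq_range_of_mem hpℓ
  have hK : IsCompact (convexHull ℝ (vertexSet L)) :=
    L.finite_toSet.isCompact_convexHull (𝕜 := ℝ)
  obtain ⟨X, Y, hXY, hXYℓ⟩ :=
    (convex_convexHull ℝ _).exists_line_inter_frontier_eq_pair (hK.isVonNBounded (𝕜 := ℝ)) hp hd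
  rw [← hℓ, ← (hconv : edg L = _)] at hXYℓ
  have hXedg : X ∈ edg L := (hXYℓ.symm ▸ mem_insert X {Y} : X ∈ ℓ ∩ edg L).2
  have hYedg : Y ∈ edg L := (hXYℓ.symm ▸ mem_insert_of_mem X rfl : Y ∈ ℓ ∩ edg L).2
  have hedg_sub : edg L ⊆ convexHull ℝ (vertexSet L) := hconv ▸ hK.isClosed.frontier_subset
  obtain ⟨i, hi, hXi⟩ := exists_mem_hseg_of_mem_edg hXedg
    (exists_mem_vertexSet_ne_of_mem_convexHull (hedg_sub hYedg) hXY)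
  obtain ⟨j, hj, hYj⟩ := exists_mem_hseg_of_mem_edg hYedg
    (exists_mem_vertexSet_ne_of_mem_convexHull (hedg_sub hXedg) hXY.symm)
  have hij : i ≠ j := by
    rintro rfl
    exact hXY (eq_of_inter_eq_pair_of_mem_segment hline.convex hXYℓ (segment_subset_edg hi)
      (hseg_subset_segment _ _ hXi) (hseg_subset_segment _ _ hYj))
  rcases hij.lt_or_gt with h | h
  · exact ⟨X, Y, i, j, hXY, hXYℓ, h, hj, hXi, hYj⟩
  · exact ⟨Y, X, j, i, hXY.symm, hXYℓ.trans (pair_comm X Y), h, hi, hYj, hXi⟩
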